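/- Define genus-labelled graphs inductively: 1 is a graph of genus 0 and order 0, and from graphs t₁ (genus g₁, order n₁) and t₂ (genus g₂, order n₂) one forms t₁ ∨ t₂ of genus g₁+g₂ and order n₁+n₂+1, and t₁ ⌒ t₂ (bridge) of genus g₁+g₂+1 and order n₁+n₂+1. Define ∗_h on the free k-module on such graphs by t ∗_h 1 = 1 ∗_h t = t and the four-case recursion: (a∘b) ∗_h (c∘'d) = (a∘b ∗_h c) ∘' d + a ∘ (b ∗_h (c∘'d)), where ∘,∘' each independently stand for ∨ or ⌒ and the first summand uses the connective ∘' of the right factor on its outer decomposition while the second summand uses the connective ∘ of the left factor. Then ∗_h is associative. -/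

import Mathlib

/-!
Write `∘` also for the bilinear extension of a connective. By multilinearity the defining
recursion `(x ∘ y) ∗ (z ∘' w) = ((x ∘ y) ∗ z) ∘' w + x ∘ (y ∗ (z ∘' w))` holds for arbitrary
elements `x y z w`, not only for basis graphs. For `t = a ∘ b`, `s = c ∘' d`, `u = e ∘'' f`,
expanding both sides with it gives
`(t ∗ s) ∗ u = ((t ∗ s) ∗ e) ∘'' f + (t ∗ c) ∘' (d ∗ u) + a ∘ ((b ∗ s) ∗ u)` and
`t ∗ (s ∗ u) = (t ∗ (s ∗ e)) ∘'' f + (t ∗ c) ∘' (d ∗ u) + a ∘ (b ∗ (s ∗ u))`,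
so associativity follows by induction on the total order, and extends from basis graphs to
`k[Y^∞]_h` by trilinearity.
-/

/-- Genus-labelled graphs: `one` is the trivial graph `1 = |`, `vee` is grafting `∨`,
and `br` is the bridge operation `⌒` (which creates a loop). -/
inductive G where
  | one : G
  | vee : G → G → G
  | br : G → G → G
deriving DecidableEq

namespace G

/-- The order of a graph: the number of internal vertices of the underlying tree. -/
def order : G → ℕ
  | one => 0
  | vee a b => order a + order b + 1
  | br a b => order a + order b + 1

/-- The genus (loop number) of a graph. -/
def genus : G → ℕ
  | one => 0
  | vee a b => genus a + genus b
  | br a b => genus a + genus b + 1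

/-- The number of free (uncontracted) leaves of a graph. -/
def freeLeaves : G → ℕ
  | one => 1
  | vee a b => freeLeaves a + freeLeaves b
  | br a b => freeLeaves a + freeLeaves b - 2

/-- A graph is regular when every bridge genuinely contracts two free leaves;
irregular graphs are those in which some leaf is involved in more than one loop
contraction. -/
def Regular : G → Prop
  | one => True
  | vee a b => Regular a ∧ Regular b
  | br a b => Regular a ∧ Regular b ∧ 1 ≤ freeLeaves a ∧ 1 ≤ freeLeaves b

end G

/-- The quantized product `∗_h` on basis graphs, with values in the free `k`-module
`k[Y^∞]_h`: `t ∗_h 1 = 1 ∗_h t = t` and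
`(t₁∘t₂) ∗_h (s₁∘'s₂) = ((t₁∘t₂) ∗_h s₁) ∘' s₂ + t₁ ∘ (t₂ ∗_h (s₁∘'s₂))`
for `∘, ∘' ∈ {∨, ⌒}`. -/
noncomputable def G.hstar (k : Type*) [CommRing k] : G → G → (G →₀ k)
  | .one, t => Finsupp.single t 1
  | .vee a b, .one => Finsupp.single (.vee a b) 1
  | .br a b, .one => Finsupp.single (.br a b) 1
  | .vee a b, .vee c d =>
      Finsupp.mapDomain (fun u => G.vee u d) (G.hstar k (.vee a b) c)
      + Finsupp.mapDomain (fun u => G.vee a u) (G.hstar k b (.vee c d))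
  | .vee a b, .br c d =>
      Finsupp.mapDomain (fun u => G.br u d) (G.hstar k (.vee a b) c)
      + Finsupp.mapDomain (fun u => G.vee a u) (G.hstar k b (.br c d))
  | .br a b, .vee c d =>
      Finsupp.mapDomain (fun u => G.vee u d) (G.hstar k (.br a b) c)
      + Finsupp.mapDomain (fun u => G.br a u) (G.hstar k b (.vee c d))
  | .br a b, .br c d =>
      Finsupp.mapDomain (fun u => G.br u d) (G.hstar k (.br a b) c)
      + Finsupp.mapDomain (fun u => G.br a u) (G.hstar k b (.br c d))
termination_by t s => t.order + s.order
decreasing_by all_goals simp [G.order] <;> omega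

/-- The bilinear extension of `∗_h` to the free `k`-module `k[Y^∞]_h`. -/
noncomputable def G.hstarL (k : Type*) [CommRing k] (x y : G →₀ k) : G →₀ k :=
  x.sum fun t a => y.sum fun s b => (a * b) • G.hstar k t s

/-- The one-loop graph `O = | ⌒ |`. -/
def G.O : G := G.br G.one G.one

/-- The one-vertex tree `T = | ∨ |`. -/
def G.T : G := G.vee G.one G.one

open Finsupp

theorem Finsupp.bilinear_assoc_of_single {α R : Type*} [CommSemiring R]
    (μ : (α →₀ R) →ₗ[R] (α →₀ R) →ₗ[R] (α →₀ R))
    (h : ∀ a b c : α, μ (μ (single a 1) (single b 1)) (single c 1)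
      = μ (single a 1) (μ (single b 1) (single c 1)))
    (x y z : α →₀ R) : μ (μ x y) z = μ x (μ y z) := by
  suffices (LinearMap.llcomp R _ _ _ μ).comp μ
      = ((LinearMap.llcomp R _ _ _).comp μ).compl₂ μ from
    LinearMap.congr_fun (LinearMap.congr_fun (LinearMap.congr_fun this x) y) z
  ext a b c : 6
  exact h a b c

namespace G

def node : Bool → G → G → G
  | true => vee
  | false => br

theorem order_node (p : Bool) (a b : G) : (node p a b).order = a.order + b.order + 1 := by
  cases p <;> rfl

theorem eq_one_or_eq_node (t : G) : t = one ∨ ∃ p a b, t = node p a b := by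
  cases t with
  | one => exact .inl rfl
  | vee a b => exact .inr ⟨true, a, b, rfl⟩
  | br a b => exact .inr ⟨false, a, b, rfl⟩

variable (k : Type*) [CommRing k]

noncomputable def hstarₗ : (G →₀ k) →ₗ[k] (G →₀ k) →ₗ[k] (G →₀ k) :=
  linearCombination k fun t => linearCombination k (hstar k t)

noncomputable def nodeₗ (p : Bool) : (G →₀ k) →ₗ[k] (G →₀ k) →ₗ[k] (G →₀ k) :=
  linearCombination k fun a => linearCombination k fun b => single (node p a b) 1

local infixl:70 " ⋆ " => hstarₗ _

variable {k}

theorem hstarL_eq_hstarₗ (x y : G →₀ k) : hstarL k x y = x ⋆ y := by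
  simp only [hstarL, hstarₗ, linearCombination_apply, LinearMap.finsupp_sum_apply,
    LinearMap.smul_apply, Finsupp.smul_sum, smul_smul]

theorem hstarₗ_single_single (t s : G) :
    single t 1 ⋆ single s 1 = hstar k t s := by
  simp [hstarₗ]

theorem nodeₗ_single_single (p : Bool) (a b : G) :
    nodeₗ k p (single a 1) (single b 1) = single (node p a b) 1 := by
  simp [nodeₗ]

theorem mapDomain_node_left (p : Bool) (b : G) (x : G →₀ k) :
    mapDomain (node p · b) x = nodeₗ k p x (single b 1) := by
  induction x using Finsupp.induction_linear with
  | zero => simp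
  | add x x' hx hx' => simp [mapDomain_add, hx, hx']
  | single a α => simp [nodeₗ]

theorem mapDomain_node_right (p : Bool) (a : G) (y : G →₀ k) :
    mapDomain (node p a ·) y = nodeₗ k p (single a 1) y := by
  induction y using Finsupp.induction_linear with
  | zero => simp
  | add y y' hy hy' => simp [mapDomain_add, hy, hy']
  | single b β => simp [nodeₗ]

theorem hstar_node_node (p q : Bool) (a b c d : G) :
    hstar k (node p a b) (node q c d)
      = nodeₗ k q (hstar k (node p a b) c) (single d 1)
        + nodeₗ k p (single a 1) (hstar k b (node q c d)) := by
  rw [← mapDomain_node_left, ← mapDomain_node_right]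
  cases p <;> cases q <;> simp only [node] <;> rw [hstar]

theorem one_hstarₗ (x : G →₀ k) : single one 1 ⋆ x = x := by
  induction x using Finsupp.induction_linear with
  | zero => simp
  | add x x' hx hx' => simp [hx, hx']
  | single t α => simp [hstarₗ, hstar]

theorem hstar_one_right (t : G) : hstar k t one = single t 1 := by
  cases t <;> rw [hstar]

theorem hstarₗ_one (x : G →₀ k) : x ⋆ single one 1 = x := by
  induction x using Finsupp.induction_linear with
  | zero => simp
  | add x x' hx hx' => simp [hx, hx']
  | single t α => simp [hstarₗ, hstar_one_right]

theorem hstarₗ_nodeₗ_nodeₗ (p q : Bool) (x y z w : G →₀ k) :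
    nodeₗ k p x y ⋆ nodeₗ k q z w
      = nodeₗ k q (nodeₗ k p x y ⋆ z) w + nodeₗ k p x (y ⋆ nodeₗ k q z w) := by
  induction x using Finsupp.induction_linear with
  | zero => simp
  | add x x' hx hx' => simp only [map_add, LinearMap.add_apply, hx, hx']; abel
  | single a α =>
  induction y using Finsupp.induction_linear with
  | zero => simp
  | add y y' hy hy' => simp only [map_add, LinearMap.add_apply, hy, hy']; abel
  | single b β =>
  induction z using Finsupp.induction_linear with
  | zero => simp
  | add z z' hz hz' => simp only [map_add, LinearMap.add_apply, hz, hz']; abel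
  | single c γ =>
  induction w using Finsupp.induction_linear with
  | zero => simp
  | add w w' hw hw' => simp only [map_add, hw, hw']; abel
  | single d δ =>
  rw [← smul_single_one a α, ← smul_single_one b β, ← smul_single_one c γ, ← smul_single_one d δ]
  simp only [map_smul, LinearMap.smul_apply, nodeₗ_single_single, hstarₗ_single_single,
    hstar_node_node, smul_add, smul_smul, mul_assoc]

theorem hstarₗ_assoc_nodeₗ (p q r : Bool) (a b c d e f : G →₀ k)
    (h₁ : nodeₗ k p a b ⋆ nodeₗ k q c d ⋆ e = nodeₗ k p a b ⋆ (nodeₗ k q c d ⋆ e))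
    (h₂ : b ⋆ nodeₗ k q c d ⋆ nodeₗ k r e f = b ⋆ (nodeₗ k q c d ⋆ nodeₗ k r e f)) :
    nodeₗ k p a b ⋆ nodeₗ k q c d ⋆ nodeₗ k r e f
      = nodeₗ k p a b ⋆ (nodeₗ k q c d ⋆ nodeₗ k r e f) := by
  set T := nodeₗ k p a b
  set S := nodeₗ k q c d
  set U := nodeₗ k r e f
  have hT (s : Bool) (z w : G →₀ k) :
      T ⋆ nodeₗ k s z w = nodeₗ k s (T ⋆ z) w + nodeₗ k p a (b ⋆ nodeₗ k s z w) :=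
    hstarₗ_nodeₗ_nodeₗ ..
  have hU (s : Bool) (x y : G →₀ k) :
      nodeₗ k s x y ⋆ U = nodeₗ k r (nodeₗ k s x y ⋆ e) f + nodeₗ k s x (y ⋆ U) :=
    hstarₗ_nodeₗ_nodeₗ ..
  calc T ⋆ S ⋆ U
      = nodeₗ k q (T ⋆ c) d ⋆ U + nodeₗ k p a (b ⋆ S) ⋆ U := by
        rw [hT, map_add, LinearMap.add_apply]
    _ = nodeₗ k r (T ⋆ S ⋆ e) f + nodeₗ k q (T ⋆ c) (d ⋆ U) + nodeₗ k p a (b ⋆ S ⋆ U) := by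
        rw [hU, hU, hT q, map_add, LinearMap.add_apply, map_add, LinearMap.add_apply]
        abel
    _ = nodeₗ k r (T ⋆ (S ⋆ e)) f + nodeₗ k q (T ⋆ c) (d ⋆ U) + nodeₗ k p a (b ⋆ (S ⋆ U)) := by
        rw [h₁, h₂]
    _ = T ⋆ nodeₗ k r (S ⋆ e) f + T ⋆ nodeₗ k q c (d ⋆ U) := by
        rw [hT, hT, hU q, map_add, map_add]
        abel
    _ = T ⋆ (S ⋆ U) := by rw [hU q, map_add]

theorem hstarₗ_assoc_single (t s u : G) :
    single t 1 ⋆ single s 1 ⋆ single u 1 = single t (1 : k) ⋆ (single s 1 ⋆ single u 1) := by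
  rcases eq_one_or_eq_node t with rfl | ⟨p, a, b, ht⟩
  · rw [one_hstarₗ, one_hstarₗ]
  rcases eq_one_or_eq_node s with rfl | ⟨q, c, d, hs⟩
  · rw [hstarₗ_one, one_hstarₗ]
  rcases eq_one_or_eq_node u with rfl | ⟨r, e, f, hu⟩
  · rw [hstarₗ_one, hstarₗ_one]
  simp only [ht, hs, hu, ← nodeₗ_single_single]
  apply hstarₗ_assoc_nodeₗ
  · simpa only [nodeₗ_single_single] using hstarₗ_assoc_single (node p a b) (node q c d) e
  · simpa only [nodeₗ_single_single] using hstarₗ_assoc_single b (node q c d) (node r e f)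
termination_by t.order + s.order + u.order
decreasing_by all_goals simp only [ht, hs, hu, order_node]; omega

theorem hstarₗ_assoc (x y z : G →₀ k) : x ⋆ y ⋆ z = x ⋆ (y ⋆ z) :=
  bilinear_assoc_of_single _ hstarₗ_assoc_single x y z

end G

theorem stmt9_general (k : Type*) [CommRing k] (x y z : G →₀ k) :
    G.hstarL k (G.hstarL k x y) z = G.hstarL k x (G.hstarL k y z) := by
  simp only [G.hstarL_eq_hstarₗ, G.hstarₗ_assoc]

/-- The quantized product `∗_h` on `k[Y^∞]_h` (defined by `t ∗_h 1 = 1 ∗_h t = t` and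
`(t₁∘t₂) ∗_h (s₁∘'s₂) = ((t₁∘t₂) ∗_h s₁) ∘' s₂ + t₁ ∘ (t₂ ∗_h (s₁∘'s₂))` for
`∘, ∘' ∈ {∨, ⌒}`, extended bilinearly) is associative. -/
theorem stmt9 (k : Type*) [CommRing k] [CharZero k] (x y z : G →₀ k) :
    G.hstarL k (G.hstarL k x y) z = G.hstarL k x (G.hstarL k y z) :=
  stmt9_general k x y z
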